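/- Let K be a compact connected topological group with normalized Haar probability measure μ, acting continuously on a locally compact, second countable Hausdorff topological space X. Let A ⊆ X be a closed subset and F ⊆ X a compact subset, and assume that μ{k ∈ K : k·x ∈ A} = 0 for every x ∈ F. Then for every ε > 0 there exists an open subset U ⊆ X with A ⊆ U such that μ{k ∈ K : k·x ∈ U} ≤ ε for every x ∈ F. -/

import Mathlib

open MeasureTheory
open scoped ENNReal

theorem stmt4 (K : Type*) [Group K] [TopologicalSpace K] [IsTopologicalGroup K]
    [CompactSpace K] [ConnectedSpace K] [MeasurableSpace K] [BorelSpace K]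
    (μ : Measure K) [μ.IsHaarMeasure] [IsProbabilityMeasure μ]
    (X : Type*) [TopologicalSpace X] [LocallyCompactSpace X]
    [SecondCountableTopology X] [T2Space X]
    [MulAction K X] [ContinuousSMul K X]
    (A : Set X) (hA : IsClosed A) (F : Set X) (hF : IsCompact F)
    (hzero : ∀ x ∈ F, μ {k : K | k • x ∈ A} = 0) :
    ∀ ε : ℝ≥0∞, 0 < ε →
      ∃ U : Set X, IsOpen U ∧ A ⊆ U ∧ ∀ x ∈ F, μ {k : K | k • x ∈ U} ≤ ε := by
  intro ε hε
  letI : MetricSpace X := TopologicalSpace.metrizableSpaceMetric X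
  -- Decreasing open neighborhoods of A
  set U : ℕ → Set X := fun n => {y | Metric.infEDist y A < ((n : ℝ≥0∞) + 1)⁻¹} with hUdef
  have hUopen : ∀ n, IsOpen (U n) :=
    fun n => isOpen_lt EMetric.continuous_infEdist continuous_const
  have hUA : ∀ n, A ⊆ U n := by
    intro n y hy
    simp only [hUdef, Set.mem_setOf_eq, EMetric.infEdist_zero_of_mem hy]
    simp [ENNReal.inv_pos]
  have hUanti : Antitone U := by
    intro m n hmn y hy
    simp only [hUdef, Set.mem_setOf_eq] at hy ⊢
    refine lt_of_lt_of_le hy ?_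
    gcongr
  have hUinter : ⋂ n, U n = A := by
    ext y
    simp only [Set.mem_iInter, hUdef, Set.mem_setOf_eq]
    constructor
    · intro h
      have h0 : Metric.infEDist y A = 0 := by
        by_contra h0
        obtain ⟨n, hn⟩ := ENNReal.exists_inv_nat_lt h0
        have h2 : ((n : ℝ≥0∞) + 1)⁻¹ ≤ (n : ℝ≥0∞)⁻¹ := by
          gcongr
          exact le_self_add
        exact lt_asymm hn (lt_of_lt_of_le (h n) h2)
      rw [← hA.closure_eq]
      exact EMetric.mem_closure_iff_infEdist_zero.mpr h0
    · intro hy n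
      rw [EMetric.infEdist_zero_of_mem hy]
      simp [ENNReal.inv_pos]
  -- closed sets sandwiched between consecutive U's
  set C : ℕ → Set X := fun n => {y | Metric.infEDist y A ≤ ((n : ℝ≥0∞) + 2)⁻¹} with hCdef
  have hCclosed : ∀ n, IsClosed (C n) :=
    fun n => isClosed_le EMetric.continuous_infEdist continuous_const
  have hUC : ∀ n, U (n + 1) ⊆ C n := by
    intro n y hy
    simp only [hCdef, Set.mem_setOf_eq]
    refine le_of_lt (lt_of_lt_of_le hy (le_of_eq ?_))
    push_cast
    ring_nf
  have hCU : ∀ n, C n ⊆ U n := by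
    intro n y hy
    simp only [hUdef, Set.mem_setOf_eq]
    refine lt_of_le_of_lt hy ?_
    gcongr
    · exact ENNReal.natCast_ne_top n
    · norm_num
  -- for each x ∈ F, find a good index and neighborhood
  have key : ∀ x ∈ F, ∃ n : ℕ, ∃ V ∈ nhds x,
      ∀ y ∈ V, μ {k : K | k • y ∈ U n} ≤ ε := by
    intro x hxF
    have hcont : ∀ y : X, Continuous fun k : K => k • y :=
      fun y => continuous_id.smul continuous_const
    have hmeas : ∀ n, NullMeasurableSet {k : K | k • x ∈ U n} μ := by
      intro n
      exact (((hUopen n).preimage (hcont x)).measurableSet).nullMeasurableSet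
    have hanti : Antitone fun n => {k : K | k • x ∈ U n} := by
      intro m n hmn k hk
      exact hUanti hmn hk
    have hfin : ∃ n, μ {k : K | k • x ∈ U n} ≠ ⊤ :=
      ⟨0, measure_ne_top μ _⟩
    have htend := MeasureTheory.tendsto_measure_iInter_atTop hmeas hanti hfin
    have hint : (⋂ n, {k : K | k • x ∈ U n}) = {k : K | k • x ∈ A} := by
      ext k
      simp only [Set.mem_iInter, Set.mem_setOf_eq]
      rw [← hUinter]
      simp
    rw [hint, hzero x hxF] at htend
    -- get n with μ small
    have hlt : ∀ᶠ n in Filter.atTop, μ {k : K | k • x ∈ U n} < ε := by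
      exact htend.eventually_lt_const hε
    obtain ⟨n, hn⟩ := hlt.exists
    -- tube lemma
    set W : Set K := {k : K | k • x ∈ U n} with hWdef
    have hWopen : IsOpen W := (hUopen n).preimage (hcont x)
    have hPopen : IsOpen {p : K × X | p.1 • p.2 ∉ C n} := by
      have : IsClosed {p : K × X | p.1 • p.2 ∈ C n} :=
        (hCclosed n).preimage (continuous_fst.smul continuous_snd)
      exact this.isOpen_compl
    have hscompact : IsCompact Wᶜ := hWopen.isClosed_compl.isCompact
    have hsub : Wᶜ ×ˢ ({x} : Set X) ⊆ {p : K × X | p.1 • p.2 ∉ C n} := by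
      rintro ⟨k, y⟩ ⟨hk, hy⟩
      simp only [Set.mem_singleton_iff] at hy
      subst hy
      intro hmem
      exact hk (hCU n hmem)
    obtain ⟨u, v, hu, hv, hWu, hxv, huv⟩ :=
      generalized_tube_lemma hscompact isCompact_singleton hPopen hsub
    refine ⟨n + 1, v, hv.mem_nhds (hxv rfl), ?_⟩
    intro y hy
    have hsubset : {k : K | k • y ∈ U (n + 1)} ⊆ W := by
      intro k hk
      by_contra hkW
      have hku : k ∈ u := hWu hkW
      have : (k, y) ∈ {p : K × X | p.1 • p.2 ∉ C n} := huv ⟨hku, hy⟩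
      exact this (hUC n hk)
    calc μ {k : K | k • y ∈ U (n + 1)} ≤ μ W := measure_mono hsubset
      _ ≤ ε := hn.le
  -- compactness argument
  choose! nx Vx hVx hgood using key
  obtain ⟨t, hcover⟩ :=
    hF.elim_nhds_subcover' (fun x hx => Vx x) (fun x hx => hVx x hx)
  set m : ℕ := t.sup (fun x => nx x) with hm
  refine ⟨U m, hUopen m, hUA m, ?_⟩
  intro x hxF
  obtain ⟨y, hyt, hxy⟩ := Set.mem_iUnion₂.mp (hcover hxF)
  have hnm : nx (y : X) ≤ m := Finset.le_sup (f := fun x : F => nx (x : X)) hyt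
  have h1 : {k : K | k • x ∈ U m} ⊆ {k : K | k • x ∈ U (nx (y : X))} := by
    intro k hk
    exact hUanti hnm hk
  calc μ {k : K | k • x ∈ U m} ≤ μ {k : K | k • x ∈ U (nx (y : X))} := measure_mono h1
    _ ≤ ε := hgood (y : X) y.2 x hxy
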